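/- arXiv:2602.01745 — 4 statements merged into one kernel-verified Lean document; each statement's English description precedes it below -/
import Mathlib

section
/- Let p be a probability mass function on the positive integers with finite mean A and finite Shannon entropy H (in bits). If H ≥ 2, then the mean satisfies A ≥ (1/4)·2^H + 1. -/
open Real in

lemma gderiv {x : ℝ} (hx : 1 < x) :
    HasDerivAt (fun x : ℝ => x * Real.log x - (x-1) * Real.log (x-1))
      (Real.log x - Real.log (x-1)) x := by
  have hx0 : x ≠ 0 := by linarith
  have hx1 : x - 1 ≠ 0 := by linarith
  have h1 : HasDerivAt (fun x : ℝ => x * Real.log x) (Real.log x + 1) x := by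
    have := (hasDerivAt_id x).mul (Real.hasDerivAt_log hx0)
    refine this.congr_deriv ?_
    field_simp
    simp only [id_eq]; ring
  have h2 : HasDerivAt (fun x : ℝ => (x-1) * Real.log (x-1)) (Real.log (x-1) + 1) x := by
    have hl : HasDerivAt (fun x : ℝ => Real.log (x - 1)) (x-1)⁻¹ x := by
      have := (Real.hasDerivAt_log hx1).comp x ((hasDerivAt_id x).sub_const 1)
      exact this.congr_deriv (mul_one _)
    have := ((hasDerivAt_id x).sub_const 1).mul hl
    refine this.congr_deriv ?_
    field_simp
    simp only [id_eq]; ring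
  have := h1.sub h2
  refine this.congr_deriv ?_
  ring

lemma hderiv {x : ℝ} (hx : 1 < x) :
    HasDerivAt (fun x : ℝ => x * Real.log x - x * Real.log (x-1))
      (Real.log x - Real.log (x-1) - (x-1)⁻¹) x := by
  have hx0 : x ≠ 0 := by linarith
  have hx1 : x - 1 ≠ 0 := by linarith
  have h1 : HasDerivAt (fun x : ℝ => x * Real.log x) (Real.log x + 1) x := by
    have := (hasDerivAt_id x).mul (Real.hasDerivAt_log hx0)
    refine this.congr_deriv ?_
    field_simp
    simp only [id_eq]; ring
  have hl : HasDerivAt (fun x : ℝ => Real.log (x - 1)) (x-1)⁻¹ x := by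
    have := (Real.hasDerivAt_log hx1).comp x ((hasDerivAt_id x).sub_const 1)
    exact this.congr_deriv (mul_one _)
  have h2 : HasDerivAt (fun x : ℝ => x * Real.log (x-1)) (Real.log (x-1) + x * (x-1)⁻¹) x := by
    have := (hasDerivAt_id x).mul hl
    refine this.congr_deriv ?_
    simp only [id_eq, one_mul]
    try ring
  have := h1.sub h2
  refine this.congr_deriv ?_
  have : x * (x-1)⁻¹ = 1 + (x-1)⁻¹ := by field_simp; ring
  rw [this]; ring

lemma g_mono : StrictMonoOn (fun x : ℝ => x * Real.log x - (x-1) * Real.log (x-1)) (Set.Ioi 1) := by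
  apply strictMonoOn_of_deriv_pos (convex_Ioi 1)
  · exact fun x hx => ((gderiv (Set.mem_Ioi.mp hx)).differentiableAt.continuousAt).continuousWithinAt
  · intro x hx
    rw [interior_Ioi, Set.mem_Ioi] at hx
    rw [(gderiv hx).deriv]
    have := Real.log_lt_log (show (0:ℝ) < x - 1 by linarith) (show x - 1 < x by linarith)
    linarith

lemma h_anti : AntitoneOn (fun x : ℝ => x * Real.log x - x * Real.log (x-1)) (Set.Ici 2) := by
  apply antitoneOn_of_deriv_nonpos (convex_Ici 2)
  · exact fun x hx => ((hderiv (by have := Set.mem_Ici.mp hx; linarith)).differentiableAt.continuousAt).continuousWithinAt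
  · intro x hx
    rw [interior_Ici, Set.mem_Ioi] at hx
    exact (hderiv (by linarith)).differentiableAt.differentiableWithinAt
  · intro x hx
    rw [interior_Ici, Set.mem_Ioi] at hx
    have hx1 : (0:ℝ) < x - 1 := by linarith
    rw [(hderiv (by linarith)).deriv]
    have hpos : 0 < x / (x-1) := by positivity
    have := Real.log_le_sub_one_of_pos hpos
    rw [Real.log_div (by linarith) (by linarith)] at this
    have hxx : x / (x-1) - 1 = (x-1)⁻¹ := by field_simp; ring
    linarith [hxx ▸ this]

/-- If a probability mass function on the positive integers has finite mean `A` and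
finite Shannon entropy `H` (in bits) with `H ≥ 2`, then `A ≥ (1/4) * 2^H + 1`. -/
theorem stmt_9 (p : ℕ → ℝ) (hnn : ∀ i, 1 ≤ i → 0 ≤ p i)
    (hsum : HasSum (fun i : ℕ => p (i + 1)) 1)
    (A : ℝ) (hmean : HasSum (fun i : ℕ => ((i : ℝ) + 1) * p (i + 1)) A)
    (H : ℝ)
    (hent : HasSum (fun i : ℕ => -(p (i + 1) * Real.logb 2 (p (i + 1)))) H)
    (hH : 2 ≤ H) :
    (1 / 4) * (2 : ℝ) ^ H + 1 ≤ A := by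
  have hlog2 : (0:ℝ) < Real.log 2 := Real.log_pos one_lt_two
  have pn : ∀ i : ℕ, 0 ≤ p (i + 1) := fun i => hnn (i+1) (by omega)
  -- mean is ≥ 1
  have hA1 : 1 ≤ A := by
    refine hasSum_le (fun i => ?_) hsum hmean
    nlinarith [pn i, Nat.cast_nonneg (α := ℝ) i]
  -- S1 : sum of i * p(i+1) = A - 1
  have S1 : HasSum (fun i : ℕ => (i:ℝ) * p (i + 1)) (A - 1) := by
    have := hmean.sub hsum
    convert this using 2 with i
    · rfl
    ring
  -- A > 1
  have hA1' : 1 < A := by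
    rcases hA1.lt_or_eq with h | h
    · exact h
    · exfalso
      have hz : HasSum (fun i : ℕ => (i:ℝ) * p (i + 1)) 0 := by
        rw [← h] at S1; simpa using S1
      have hzero : ∀ i : ℕ, (i:ℝ) * p (i + 1) = 0 := by
        intro i
        have := (hasSum_zero_iff_of_nonneg (fun j => mul_nonneg (Nat.cast_nonneg j) (pn j))).mp hz
        exact congrFun this i
      have hp0 : ∀ i : ℕ, 1 ≤ i → p (i + 1) = 0 := by
        intro i hi
        have := hzero i
        have hi' : (0:ℝ) < (i:ℝ) := by exact_mod_cast hi
        have := mul_eq_zero.mp this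
        rcases this with h' | h'
        · exact absurd h' hi'.ne'
        · exact h'
      have hp1 : p 1 = 1 := by
        have hs : HasSum (fun i : ℕ => p (i + 1)) (p (0 + 1)) := by
          apply hasSum_single 0
          intro b hb
          exact hp0 b (Nat.one_le_iff_ne_zero.mpr hb)
        have := hs.unique hsum
        simpa using this
      have hH0 : H = 0 := by
        have hz2 : HasSum (fun i : ℕ => -(p (i + 1) * Real.logb 2 (p (i + 1)))) 0 := by
          have : (fun i : ℕ => -(p (i + 1) * Real.logb 2 (p (i + 1)))) = fun _ => 0 := by
            funext i
            cases i with
            | zero => simp [hp1]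
            | succ n => simp [hp0 (n+1) (by omega)]
          rw [this]; exact hasSum_zero
        exact hent.unique hz2
      linarith
  have hApos : (0:ℝ) < A := by linarith
  set r : ℝ := (A - 1) / A with hrdef
  have hr0 : 0 < r := by rw [hrdef]; exact div_pos (by linarith) hApos
  have hr1 : r < 1 := by
    rw [hrdef, div_lt_one hApos]; linarith
  have h1r : 1 - r = 1 / A := by
    rw [hrdef]; field_simp; ring
  set q : ℕ → ℝ := fun i => (1 / A) * r ^ i with hqdef
  have hqpos : ∀ i, 0 < q i := fun i => by positivity
  -- q sums to 1
  have Sq : HasSum q 1 := by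
    have := (hasSum_geometric_of_lt_one hr0.le hr1).mul_left (1 / A)
    have key : (1 / A) * (1 - r)⁻¹ = 1 := by
      rw [h1r]; field_simp
    rw [key] at this
    exact this
  -- log q i
  have logq : ∀ i : ℕ, Real.log (q i) = -Real.log A + (i:ℝ) * Real.log r := by
    intro i
    rw [hqdef]
    rw [Real.log_mul (one_div_ne_zero hApos.ne') (pow_ne_zero i hr0.ne')]
    rw [Real.log_pow, one_div, Real.log_inv]
  -- sum of p * log q
  have Splq : HasSum (fun i : ℕ => p (i + 1) * Real.log (q i))
      (-Real.log A + (A - 1) * Real.log r) := by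
    have h1 := hsum.mul_right (-Real.log A)
    have h2 := S1.mul_right (Real.log r)
    have := h1.add h2
    have e1 : 1 * -Real.log A + (A - 1) * Real.log r = -Real.log A + (A - 1) * Real.log r := by ring
    rw [e1] at this
    convert this using 2 with i
    · rfl
    rw [logq i]
    ring
  -- sum of p * log p
  have Splp : HasSum (fun i : ℕ => p (i + 1) * Real.log (p (i + 1))) (-(H * Real.log 2)) := by
    have h1 := (hent.mul_right (Real.log 2)).neg
    convert h1 using 2 with i
    · rfl
    rw [Real.logb]
    field_simp
  -- Gibbs inequality, termwise
  have term : ∀ i : ℕ, p (i + 1) * Real.log (q i) - p (i + 1) * Real.log (p (i + 1))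
      ≤ q i - p (i + 1) := by
    intro i
    rcases (pn i).eq_or_lt with h | h
    · rw [← h]; simpa using (hqpos i).le
    · have hq := hqpos i
      have hlog := Real.log_le_sub_one_of_pos (div_pos hq h)
      rw [Real.log_div hq.ne' h.ne'] at hlog
      have h2 : p (i+1) * (Real.log (q i) - Real.log (p (i+1))) ≤ p (i+1) * (q i / p (i+1) - 1) :=
        mul_le_mul_of_nonneg_left hlog h.le
      have h3 : p (i+1) * (q i / p (i+1) - 1) = q i - p (i+1) := by field_simp
      nlinarith [h2, h3]
  -- Gibbs: H log 2 ≤ log A - (A-1) log r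
  have gibbs : H * Real.log 2 ≤ Real.log A - (A - 1) * Real.log r := by
    have := hasSum_le term (Splq.sub Splp) (Sq.sub hsum)
    simp only [sub_self] at this
    linarith
  -- rewrite: H log 2 ≤ A log A - (A-1) log (A-1)
  have entbound : H * Real.log 2 ≤ A * Real.log A - (A - 1) * Real.log (A - 1) := by
    have hlr : Real.log r = Real.log (A - 1) - Real.log A := by
      rw [hrdef, Real.log_div (by linarith) (by linarith)]
    rw [hlr] at gibbs
    nlinarith [gibbs]
  -- A ≥ 2
  have hA2 : 2 ≤ A := by
    by_contra hcon
    push_neg at hcon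
    have hmem1 : A ∈ Set.Ioi (1:ℝ) := hA1'
    have hmem2 : (2:ℝ) ∈ Set.Ioi (1:ℝ) := by norm_num
    have := g_mono hmem1 hmem2 hcon
    simp only at this
    have hg2 : (2:ℝ) * Real.log 2 - (2 - 1) * Real.log (2 - 1) = 2 * Real.log 2 := by
      norm_num
    rw [hg2] at this
    nlinarith [entbound, hH, hlog2]
  -- h(A) ≤ h(2) = 2 log 2
  have hhA : A * Real.log A - A * Real.log (A - 1) ≤ 2 * Real.log 2 := by
    have hmem1 : (2:ℝ) ∈ Set.Ici (2:ℝ) := Set.self_mem_Ici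
    have hmem2 : A ∈ Set.Ici (2:ℝ) := hA2
    have := h_anti hmem1 hmem2 hA2
    simp only at this
    have hg2 : (2:ℝ) * Real.log 2 - 2 * Real.log (2 - 1) = 2 * Real.log 2 := by norm_num
    rw [hg2] at this
    exact this
  -- H log 2 ≤ 2 log 2 + log (A - 1)
  have hfin : H * Real.log 2 ≤ 2 * Real.log 2 + Real.log (A - 1) := by nlinarith [entbound, hhA]
  -- H ≤ 2 + logb 2 (A-1)
  have hHb : H ≤ 2 + Real.logb 2 (A - 1) := by
    rw [Real.logb]
    rw [← sub_nonneg]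
    have : 2 + Real.log (A-1) / Real.log 2 - H = (2 * Real.log 2 + Real.log (A-1) - H * Real.log 2) / Real.log 2 := by
      field_simp
    rw [this]
    apply div_nonneg _ hlog2.le
    linarith
  -- 2^H ≤ 4 * (A - 1)
  have hpow : (2:ℝ) ^ H ≤ 4 * (A - 1) := by
    have h1 : (2:ℝ) ^ H ≤ (2:ℝ) ^ (2 + Real.logb 2 (A-1)) :=
      Real.rpow_le_rpow_of_exponent_le one_le_two hHb
    have h2 : (2:ℝ) ^ (2 + Real.logb 2 (A-1)) = (2:ℝ)^(2:ℝ) * (A - 1) := by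
      rw [Real.rpow_add (by norm_num), Real.rpow_logb (by norm_num) (by norm_num) (by linarith)]
    have h3 : (2:ℝ)^(2:ℝ) = 4 := by
      rw [show (2:ℝ) = ((2:ℕ):ℝ) by norm_num, Real.rpow_natCast]
      norm_num
    rw [h2, h3] at h1
    exact h1
  linarith
end

section
/- Let p be a probability mass function on a finite set of size V ≥ 2 with maximal probability p_max = max_i p(i). Then the Shannon entropy in bits satisfies H(p) ≤ H_b(p_max) + (1 − p_max)·log₂(V − 1), where H_b is the binary entropy function; that is, among all distributions on V outcomes with given maximal mass p_max, the entropy is maximized by placing the remaining mass uniformly over the other V − 1 outcomes. -/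
open Finset

lemma sub_entropy_bound {ι : Type*} (s : Finset ι) (f : ι → ℝ)
    (hnn : ∀ i ∈ s, 0 ≤ f i) (hs : 0 < s.card) :
    -∑ i ∈ s, f i * Real.log (f i) ≤
      -((∑ i ∈ s, f i) * Real.log (∑ i ∈ s, f i)) +
        (∑ i ∈ s, f i) * Real.log (s.card : ℝ) := by
  set q := ∑ i ∈ s, f i with hq
  have hq0 : 0 ≤ q := Finset.sum_nonneg hnn
  rcases eq_or_lt_of_le hq0 with h0 | hpos
  · have hall : ∀ i ∈ s, f i = 0 := by
      intro i hi
      exact (Finset.sum_eq_zero_iff_of_nonneg hnn).mp h0.symm i hi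
    have hz : ∑ i ∈ s, f i * Real.log (f i) = 0 :=
      Finset.sum_eq_zero fun i hi => by rw [hall i hi]; ring
    rw [hz, ← h0]
    simp
  · have hcard : (0:ℝ) < (s.card : ℝ) := by exact_mod_cast hs
    set c := q / (s.card : ℝ) with hc
    have hcpos : 0 < c := div_pos hpos hcard
    have hpt : ∀ i ∈ s, f i * Real.log c - f i * Real.log (f i) ≤ c - f i := by
      intro i hi
      rcases eq_or_lt_of_le (hnn i hi) with hf0 | hf
      · rw [← hf0]; simpa using hcpos.le
      · have hlog := Real.log_le_sub_one_of_pos (div_pos hcpos hf)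
        rw [Real.log_div hcpos.ne' hf.ne'] at hlog
        have h2 : f i * (c / f i - 1) = c - f i := by field_simp
        nlinarith [mul_le_mul_of_nonneg_left hlog hf.le]
    have hsum2 := Finset.sum_le_sum hpt
    rw [Finset.sum_sub_distrib] at hsum2
    have h1 : ∑ i ∈ s, f i * Real.log c = q * Real.log c := by
      rw [← Finset.sum_mul]
    have h2 : ∑ i ∈ s, (c - f i) = 0 := by
      rw [Finset.sum_sub_distrib, Finset.sum_const, nsmul_eq_mul, ← hq, hc]
      field_simp
      ring
    have hlogc : q * Real.log c = q * Real.log q - q * Real.log (s.card : ℝ) := by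
      rw [hc, Real.log_div hpos.ne' hcard.ne']; ring
    rw [h1, h2, hlogc] at hsum2
    linarith

/-- Fano-type bound: for a pmf on `V ≥ 2` outcomes with maximal probability `pmax`,
the Shannon entropy in bits is at most `H_b(pmax) + (1 - pmax) * log₂(V - 1)`. -/
theorem stmt_10 (V : ℕ) (hV : 2 ≤ V) (p : Fin V → ℝ) (hnn : ∀ i, 0 ≤ p i)
    (hsum : ∑ i, p i = 1)
    (pmax : ℝ) (hmax : ∀ i, p i ≤ pmax) (hatt : ∃ i, p i = pmax) :
    -∑ i, p i * Real.logb 2 (p i) ≤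
      (-(pmax * Real.logb 2 pmax) - (1 - pmax) * Real.logb 2 (1 - pmax)) +
        (1 - pmax) * Real.logb 2 ((V : ℝ) - 1) := by
  obtain ⟨i0, hi0⟩ := hatt
  have hsplit : ∑ i, p i * Real.log (p i)
      = pmax * Real.log pmax + ∑ i ∈ univ.erase i0, p i * Real.log (p i) := by
    rw [← Finset.add_sum_erase _ _ (Finset.mem_univ i0), hi0]
  have hqsum : ∑ i ∈ univ.erase i0, p i = 1 - pmax := by
    have h := Finset.add_sum_erase Finset.univ p (Finset.mem_univ i0)
    rw [hi0, hsum] at h; linarith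
  have hcard : (univ.erase i0).card = V - 1 := by
    rw [Finset.card_erase_of_mem (Finset.mem_univ i0), Finset.card_univ,
      Fintype.card_fin]
  have hcast : ((V - 1 : ℕ) : ℝ) = (V : ℝ) - 1 := by
    have : (1:ℕ) ≤ V := by omega
    push_cast [Nat.cast_sub this]; ring
  have key := sub_entropy_bound (univ.erase i0) p (fun i _ => hnn i)
    (by rw [hcard]; omega)
  rw [hqsum, hcard, hcast] at key
  -- natural-log version of the goal
  have keymain : -∑ i, p i * Real.log (p i) ≤
      (-(pmax * Real.log pmax) - (1 - pmax) * Real.log (1 - pmax)) +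
        (1 - pmax) * Real.log ((V : ℝ) - 1) := by
    rw [hsplit]; linarith
  have L2 : (0:ℝ) < Real.log 2 := Real.log_pos one_lt_two
  simp only [Real.logb]
  have hL : ∑ i, p i * (Real.log (p i) / Real.log 2)
      = (∑ i, p i * Real.log (p i)) / Real.log 2 := by
    rw [Finset.sum_div]
    exact Finset.sum_congr rfl fun i _ => by ring
  rw [hL, ← neg_div]
  have hR : (-(pmax * (Real.log pmax / Real.log 2))
      - (1 - pmax) * (Real.log (1 - pmax) / Real.log 2))
      + (1 - pmax) * (Real.log ((V : ℝ) - 1) / Real.log 2)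
      = ((-(pmax * Real.log pmax) - (1 - pmax) * Real.log (1 - pmax))
          + (1 - pmax) * Real.log ((V : ℝ) - 1)) / Real.log 2 := by
    ring
  rw [hR]
  exact div_le_div_of_nonneg_right keymain L2.le
end

section
/- Let p be a probability mass function on {1, …, V} with V ≥ 2, sorted non-increasingly so that p(1) = max_i p(i), let H be its Shannon entropy in bits, and let E = ∑_{i=1}^V i·p(i) be its expected rank. If q ∈ [1/V, 1] satisfies H_b(q) + (1−q)·log₂(V−1) ≤ H, then E ≥ 2 − q. -/
lemma stmt12_aux_anti (V : ℕ) (hV : 2 ≤ V) :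
    StrictAntiOn (fun x : ℝ => -(x * Real.log x) - (1 - x) * Real.log (1 - x)
      + (1 - x) * Real.log ((V : ℝ) - 1)) (Set.Icc (1 / (V : ℝ)) 1) := by
  have hV1 : (1 : ℝ) ≤ (V : ℝ) - 1 := by
    have : (2 : ℝ) ≤ V := by exact_mod_cast hV
    linarith
  apply strictAntiOn_of_deriv_neg (convex_Icc _ _)
  · apply Continuous.continuousOn
    exact ((Real.continuous_mul_log.neg).sub
        (Real.continuous_mul_log.comp (continuous_const.sub continuous_id))).add
      ((continuous_const.sub continuous_id).mul continuous_const)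
  · intro x hx
    rw [interior_Icc] at hx
    obtain ⟨hxl, hxr⟩ := hx
    have hVpos : (0 : ℝ) < V := by positivity
    have hx0 : 0 < x := lt_trans (by positivity) hxl
    have h1x : 0 < 1 - x := by linarith
    have h1 : HasDerivAt (fun x : ℝ => x * Real.log x) (Real.log x + 1) x :=
      Real.hasDerivAt_mul_log hx0.ne'
    have hinner : HasDerivAt (fun y : ℝ => 1 - y) (-1) x := by
      simpa using (hasDerivAt_id x).const_sub 1
    have h2 : HasDerivAt (fun y : ℝ => (1 - y) * Real.log (1 - y))
        ((Real.log (1 - x) + 1) * (-1)) x :=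
      (Real.hasDerivAt_mul_log h1x.ne').comp x hinner
    have h3 : HasDerivAt (fun y : ℝ => (1 - y) * Real.log ((V : ℝ) - 1))
        ((-1) * Real.log ((V : ℝ) - 1)) x := hinner.mul_const _
    have hG : HasDerivAt (fun x : ℝ => -(x * Real.log x) - (1 - x) * Real.log (1 - x)
        + (1 - x) * Real.log ((V : ℝ) - 1))
        (-(Real.log x + 1) - (Real.log (1 - x) + 1) * (-1) + (-1) * Real.log ((V : ℝ) - 1)) x :=
      (h1.neg.sub h2).add h3
    rw [hG.deriv]
    have hxV : 1 - x < x * ((V : ℝ) - 1) := by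
      have : 1 / (V : ℝ) < x := hxl
      have h1' : 1 < x * V := by
        rw [div_lt_iff₀ hVpos] at this
        linarith
      nlinarith
    have hlog : Real.log (1 - x) < Real.log (x * ((V : ℝ) - 1)) :=
      Real.log_lt_log h1x hxV
    rw [Real.log_mul hx0.ne' (by linarith)] at hlog
    linarith

/-- If a non-increasingly sorted pmf `p` on `{1, …, V}` has entropy `H` and expected
rank `E`, and `q ∈ [1/V, 1]` satisfies `H_b(q) + (1-q) log₂(V-1) ≤ H`, then `E ≥ 2 - q`. -/
theorem stmt_12 (V : ℕ) (hV : 2 ≤ V) (p : ℕ → ℝ)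
    (hnn : ∀ i ∈ Finset.Icc 1 V, 0 ≤ p i)
    (hsum : ∑ i ∈ Finset.Icc 1 V, p i = 1)
    (hsorted : ∀ i j, 1 ≤ i → i ≤ j → j ≤ V → p j ≤ p i)
    (H E q : ℝ)
    (hH : H = -∑ i ∈ Finset.Icc 1 V, p i * Real.logb 2 (p i))
    (hE : E = ∑ i ∈ Finset.Icc 1 V, (i : ℝ) * p i)
    (hq1 : 1 / (V : ℝ) ≤ q) (hq2 : q ≤ 1)
    (hcond : (-(q * Real.logb 2 q) - (1 - q) * Real.logb 2 (1 - q)) +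
      (1 - q) * Real.logb 2 ((V : ℝ) - 1) ≤ H) :
    2 - q ≤ E := by
  have hVpos : (0 : ℝ) < V := by positivity
  have hV1 : (1 : ℝ) ≤ (V : ℝ) - 1 := by
    have : (2 : ℝ) ≤ V := by exact_mod_cast hV
    linarith
  have h1mem : (1 : ℕ) ∈ Finset.Icc 1 V := by
    simp only [Finset.mem_Icc]; omega
  have hp1nn : 0 ≤ p 1 := hnn 1 h1mem
  -- split sum : Icc 1 V = insert 1 (Icc 2 V)
  have hsplit : ∀ f : ℕ → ℝ, ∑ i ∈ Finset.Icc 1 V, f i = f 1 + ∑ i ∈ Finset.Icc 2 V, f i := by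
    intro f
    rw [← Finset.add_sum_erase _ _ h1mem, Finset.Icc_erase_left, ← Finset.Icc_add_one_left_eq_Ioc]
    rfl
  have hrest : ∑ i ∈ Finset.Icc 2 V, p i = 1 - p 1 := by
    have := hsplit p
    rw [hsum] at this
    linarith
  have hrestnn : ∀ i ∈ Finset.Icc 2 V, 0 ≤ p i := by
    intro i hi
    refine hnn i ?_
    simp only [Finset.mem_Icc] at hi ⊢
    omega
  have hs0 : 0 ≤ 1 - p 1 := hrest ▸ Finset.sum_nonneg hrestnn
  have hp1le1 : p 1 ≤ 1 := by linarith
  -- p 1 ≥ 1/V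
  have hp1V : 1 / (V : ℝ) ≤ p 1 := by
    have h1 : (1 : ℝ) ≤ V * p 1 := by
      calc (1 : ℝ) = ∑ i ∈ Finset.Icc 1 V, p i := hsum.symm
        _ ≤ ∑ i ∈ Finset.Icc 1 V, p 1 := by
            refine Finset.sum_le_sum fun i hi => ?_
            simp only [Finset.mem_Icc] at hi
            exact hsorted 1 i le_rfl hi.1 hi.2
        _ = V * p 1 := by
            rw [Finset.sum_const, Nat.card_Icc, Nat.add_sub_cancel, nsmul_eq_mul]
    rw [div_le_iff₀ hVpos]
    linarith
  -- E ≥ 2 - p 1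
  have hE1 : 2 - p 1 ≤ E := by
    rw [hE, hsplit]
    have h2 : ∑ i ∈ Finset.Icc 2 V, 2 * p i ≤ ∑ i ∈ Finset.Icc 2 V, (i : ℝ) * p i := by
      refine Finset.sum_le_sum fun i hi => ?_
      simp only [Finset.mem_Icc] at hi
      have : (2 : ℝ) ≤ i := by exact_mod_cast hi.1
      exact mul_le_mul_of_nonneg_right this (hrestnn i (by simp only [Finset.mem_Icc]; omega))
    rw [← Finset.mul_sum, hrest] at h2
    push_cast
    linarith
  -- suffices p 1 ≤ q
  suffices hpq : p 1 ≤ q by linarith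
  by_contra hlt
  push_neg at hlt
  -- natural-log entropy
  set Hn := -∑ i ∈ Finset.Icc 1 V, p i * Real.log (p i) with hHn
  set G := fun x : ℝ => -(x * Real.log x) - (1 - x) * Real.log (1 - x)
      + (1 - x) * Real.log ((V : ℝ) - 1) with hG
  have hlog2 : (0 : ℝ) < Real.log 2 := Real.log_pos one_lt_two
  -- hcond in natural log: G q ≤ Hn
  have hGq : G q ≤ Hn := by
    have e1 : (-(q * Real.logb 2 q) - (1 - q) * Real.logb 2 (1 - q)) +
        (1 - q) * Real.logb 2 ((V : ℝ) - 1) = G q / Real.log 2 := by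
      simp only [hG, Real.logb]
      ring
    have e2 : H = Hn / Real.log 2 := by
      rw [hH, hHn]
      simp only [Real.logb, neg_div, Finset.sum_div, mul_div_assoc]
    rw [e1, e2, div_le_div_iff_of_pos_right hlog2] at hcond
    exact hcond
  -- Fano: Hn ≤ G (p 1)
  have hFano : Hn ≤ G (p 1) := by
    have key : -∑ i ∈ Finset.Icc 2 V, p i * Real.log (p i) ≤
        (1 - p 1) * Real.log ((V : ℝ) - 1) - (1 - p 1) * Real.log (1 - p 1) := by
      rcases eq_or_lt_of_le hs0 with hs | hs
      · have hz : ∀ i ∈ Finset.Icc 2 V, p i = 0 := by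
          rw [← Finset.sum_eq_zero_iff_of_nonneg hrestnn, hrest, ← hs]
        rw [Finset.sum_eq_zero fun i hi => by rw [hz i hi]; simp, ← hs]
        simp
      · set s := 1 - p 1 with hsdef
        set u := s / ((V : ℝ) - 1) with hu
        have hVm1 : (0 : ℝ) < (V : ℝ) - 1 := by linarith
        have hupos : 0 < u := div_pos hs hVm1
        have hterm : ∀ i ∈ Finset.Icc 2 V,
            p i * Real.log u - p i * Real.log (p i) ≤ u - p i := by
          intro i hi
          rcases eq_or_lt_of_le (hrestnn i hi) with h0 | h0
          · rw [← h0]; simp; linarith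
          · have := Real.log_le_sub_one_of_pos (div_pos hupos h0)
            rw [Real.log_div hupos.ne' h0.ne'] at this
            have h2 := mul_le_mul_of_nonneg_left this h0.le
            have h3 : p i * (u / p i - 1) = u - p i := by field_simp
            linarith [h2, h3 ▸ h2]
        have hsumle : ∑ i ∈ Finset.Icc 2 V, (p i * Real.log u - p i * Real.log (p i)) ≤
            ∑ i ∈ Finset.Icc 2 V, (u - p i) := Finset.sum_le_sum hterm
        have hcard : ((Finset.Icc 2 V).card : ℝ) = (V : ℝ) - 1 := by
          rw [Nat.card_Icc]
          have : V + 1 - 2 = V - 1 := by omega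
          rw [this, Nat.cast_sub (by omega)]
          simp
        rw [Finset.sum_sub_distrib, Finset.sum_sub_distrib, ← Finset.sum_mul, hrest,
          Finset.sum_const, nsmul_eq_mul, hcard] at hsumle
        have hucv : ((V : ℝ) - 1) * u = s := by
          rw [hu, mul_div_cancel₀ _ hVm1.ne']
        have hlogu : Real.log u = Real.log s - Real.log ((V : ℝ) - 1) :=
          Real.log_div hs.ne' hVm1.ne'
        rw [hlogu, hucv] at hsumle
        have : s * (Real.log s - Real.log ((V : ℝ) - 1)) -
            ∑ i ∈ Finset.Icc 2 V, p i * Real.log (p i) ≤ 0 := by linarith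
        linarith [this, mul_sub s (Real.log s) (Real.log ((V : ℝ) - 1))]
    rw [hHn, hsplit (fun i => p i * Real.log (p i)), hG]
    simp only [neg_add]
    linarith
  -- strict anti contradiction
  have hanti := stmt12_aux_anti V hV
  have hqmem : q ∈ Set.Icc (1 / (V : ℝ)) 1 := ⟨hq1, hq2⟩
  have hpmem : p 1 ∈ Set.Icc (1 / (V : ℝ)) 1 := ⟨hp1V, hp1le1⟩
  have hcontra : G (p 1) < G q := hanti hqmem hpmem hlt
  linarith
end

section
/- Let p be a probability mass function on {1, …, V}, sorted non-increasingly, with Shannon entropy H (in bits) satisfying H ≥ 2, and expected rank E = ∑_{i=1}^V i·p(i). Suppose the ground-truth token has probability q > 0 and rank R (i.e., exactly R tokens, including itself, have probability ≥ q). Then E/R ≥ q·((1/4)·2^H + 1), and consequently for every exponent K > 0, (E/R)^K ≥ (q·((1/4)·2^H + 1))^K. -/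
private lemma gibbs_term (a b : ℝ) (ha : 0 ≤ a) (hb : 0 < b) :
    a * Real.log b - a * Real.log a ≤ b - a := by
  rcases eq_or_lt_of_le ha with h | h
  · simp [← h]; positivity
  · have hlog : Real.log b - Real.log a = Real.log (b / a) :=
      (Real.log_div hb.ne' h.ne').symm
    have h2 : Real.log (b / a) ≤ b / a - 1 :=
      Real.log_le_sub_one_of_pos (div_pos hb h)
    have : a * Real.log b - a * Real.log a = a * Real.log (b / a) := by
      rw [← hlog]; ring
    rw [this]
    calc a * Real.log (b / a) ≤ a * (b / a - 1) := by
          exact mul_le_mul_of_nonneg_left h2 ha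
      _ = b - a := by field_simp
private lemma concave_aux (t : ℝ) (h0 : 0 ≤ t) (h1 : t ≤ 1) :
    (1 + t) * Real.log (1 + t) ≤ 2 * t * Real.log 2 := by
  have hc := Real.convexOn_mul_log
  have key := hc.2 (by norm_num : (1:ℝ) ∈ Set.Ici (0:ℝ))
    (by norm_num : (2:ℝ) ∈ Set.Ici (0:ℝ)) (by linarith : (0:ℝ) ≤ 1 - t) h0
    (by ring : (1 - t) + t = 1)
  simp only [smul_eq_mul] at key
  have e1 : (1 - t) * 1 + t * 2 = 1 + t := by ring
  rw [e1] at key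
  simp [Real.log_one] at key
  nlinarith [key]

/-- For a non-increasingly sorted pmf on `{1, …, V}` with entropy `H ≥ 2` (bits) and
expected rank `E`, if the ground-truth token has probability `q > 0` and rank `R`
(the number of tokens with probability ≥ q), then `E/R ≥ q ((1/4) 2^H + 1)`, and hence
`(E/R)^K ≥ (q ((1/4) 2^H + 1))^K` for every `K > 0`. -/
theorem stmt_16 (V : ℕ) (p : ℕ → ℝ)
    (hnn : ∀ i ∈ Finset.Icc 1 V, 0 ≤ p i)
    (hsum : ∑ i ∈ Finset.Icc 1 V, p i = 1)
    (hsorted : ∀ i j, 1 ≤ i → i ≤ j → j ≤ V → p j ≤ p i)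
    (H E q : ℝ)
    (hH : H = -∑ i ∈ Finset.Icc 1 V, p i * Real.logb 2 (p i))
    (hH2 : 2 ≤ H)
    (hE : E = ∑ i ∈ Finset.Icc 1 V, (i : ℝ) * p i)
    (hq : 0 < q) (htoken : ∃ i ∈ Finset.Icc 1 V, p i = q)
    (R : ℕ) (hR : R = ((Finset.Icc 1 V).filter fun i => q ≤ p i).card) :
    q * ((1 / 4) * (2 : ℝ) ^ H + 1) ≤ E / (R : ℝ) ∧
    ∀ K : ℝ, 0 < K →
      (q * ((1 / 4) * (2 : ℝ) ^ H + 1)) ^ K ≤ (E / (R : ℝ)) ^ K := by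
  have hlog2 : (0:ℝ) < Real.log 2 := Real.log_pos (by norm_num)
  set x : ℝ := (2:ℝ) ^ H / 4 with hxdef
  have h2H : (4:ℝ) ≤ (2:ℝ) ^ H := by
    have h1 : (2:ℝ) ^ (2:ℝ) ≤ (2:ℝ) ^ H :=
      Real.rpow_le_rpow_of_exponent_le one_le_two hH2
    have h2 : (2:ℝ) ^ (2:ℝ) = 4 := by
      rw [show ((2:ℝ):ℝ) = ((2:ℕ):ℝ) by norm_num, Real.rpow_natCast]; norm_num
    linarith
  have hx1 : (1:ℝ) ≤ x := by rw [hxdef]; linarith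
  have hx0 : (0:ℝ) < x := by linarith
  have hx10 : (0:ℝ) < x + 1 := by linarith
  -- the geometric comparison distribution
  set r : ℝ := x / (x + 1) with hrdef
  have hr0 : 0 < r := div_pos hx0 hx10
  have hr1 : r < 1 := (div_lt_one hx10).mpr (by linarith)
  set Q : ℕ → ℝ := fun i => r ^ (i - 1) * (1 / (x + 1)) with hQdef
  have hQpos : ∀ i, 0 < Q i := fun i => by positivity
  -- Gibbs inequality
  have hGibbs : ∑ i ∈ Finset.Icc 1 V, (p i * Real.log (Q i) - p i * Real.log (p i))
      ≤ (∑ i ∈ Finset.Icc 1 V, Q i) - 1 := by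
    rw [← hsum, ← Finset.sum_sub_distrib]
    exact Finset.sum_le_sum fun i hi => gibbs_term (p i) (Q i) (hnn i hi) (hQpos i)
  -- the comparison distribution has total mass at most 1
  have hQsum : ∑ i ∈ Finset.Icc 1 V, Q i ≤ 1 := by
    have hre : ∑ i ∈ Finset.Icc 1 V, r ^ (i - 1) = ∑ j ∈ Finset.range V, r ^ j := by
      rw [← Finset.Ico_add_one_right_eq_Icc, Finset.sum_Ico_eq_sum_range]
      simp
    have hgs : (∑ j ∈ Finset.range V, r ^ j) * (1 - r) = 1 - r ^ V := by
      linear_combination -geom_sum_mul r V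
    have hrV : 0 ≤ r ^ V := by positivity
    have hgle : ∑ j ∈ Finset.range V, r ^ j ≤ x + 1 := by
      have h1r : 1 - r = 1 / (x + 1) := by rw [hrdef]; field_simp; ring
      rw [h1r] at hgs
      rw [← mul_le_mul_iff_of_pos_right (show (0:ℝ) < 1/(x+1) by positivity)]
      rw [hgs]; rw [mul_one_div, div_self hx10.ne']; linarith
    calc ∑ i ∈ Finset.Icc 1 V, Q i
        = (∑ j ∈ Finset.range V, r ^ j) * (1 / (x + 1)) := by
          rw [hQdef, ← Finset.sum_mul, hre]
      _ ≤ (x + 1) * (1 / (x + 1)) := by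
          apply mul_le_mul_of_nonneg_right hgle (by positivity)
      _ = 1 := by field_simp
  -- compute ∑ p log Q
  have hsumE1 : ∑ i ∈ Finset.Icc 1 V, ((i:ℝ) - 1) * p i = E - 1 := by
    have h : ∑ i ∈ Finset.Icc 1 V, ((i:ℝ) - 1) * p i
        = (∑ i ∈ Finset.Icc 1 V, (i:ℝ) * p i) - ∑ i ∈ Finset.Icc 1 V, p i := by
      rw [← Finset.sum_sub_distrib]
      exact Finset.sum_congr rfl fun i _ => by ring
    rw [h, ← hE, hsum]
  have hlogQ : ∑ i ∈ Finset.Icc 1 V, p i * Real.log (Q i)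
      = (E - 1) * Real.log r + Real.log (1 / (x + 1)) := by
    have : ∀ i ∈ Finset.Icc 1 V,
        p i * Real.log (Q i)
          = Real.log r * (((i:ℝ) - 1) * p i) + Real.log (1 / (x + 1)) * p i := by
      intro i hi
      have hi1 : 1 ≤ i := (Finset.mem_Icc.mp hi).1
      have : Real.log (Q i) = ((i:ℝ) - 1) * Real.log r + Real.log (1 / (x + 1)) := by
        rw [hQdef]
        rw [Real.log_mul (by positivity) (by positivity), Real.log_pow]
        rw [Nat.cast_sub hi1]; push_cast; ring
      rw [this]; ring
    rw [Finset.sum_congr rfl this, Finset.sum_add_distrib, ← Finset.mul_sum, ← Finset.mul_sum,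
      hsumE1, hsum]
    ring
  -- entropy in nats
  have hHnat : H * Real.log 2 = -∑ i ∈ Finset.Icc 1 V, p i * Real.log (p i) := by
    have : ∑ i ∈ Finset.Icc 1 V, p i * Real.logb 2 (p i)
        = (∑ i ∈ Finset.Icc 1 V, p i * Real.log (p i)) / Real.log 2 := by
      rw [Finset.sum_div]
      apply Finset.sum_congr rfl; intro i _
      rw [Real.logb, div_eq_mul_inv, div_eq_mul_inv]; ring
    rw [hH, this]; field_simp
  -- key entropy bound
  have hkey : H * Real.log 2 ≤ (E - 1) * (Real.log (x+1) - Real.log x) + Real.log (x + 1) := by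
    have h1 : -∑ i ∈ Finset.Icc 1 V, p i * Real.log (p i)
        ≤ -((E - 1) * Real.log r + Real.log (1 / (x + 1))) := by
      rw [← hlogQ]
      have := hGibbs
      have h2 : (∑ i ∈ Finset.Icc 1 V, Q i) - 1 ≤ 0 := by linarith
      rw [Finset.sum_sub_distrib] at hGibbs
      linarith
    have hlr : Real.log r = Real.log x - Real.log (x + 1) := by
      rw [hrdef, Real.log_div hx0.ne' hx10.ne']
    have hlt : Real.log (1 / (x + 1)) = -Real.log (x + 1) := by
      rw [one_div, Real.log_inv]
    rw [hHnat]
    rw [hlr, hlt] at h1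
    linarith
  -- concavity bound : (x+1) * log((x+1)/x) ≤ 2 log 2
  have hconc : (x + 1) * (Real.log (x+1) - Real.log x) ≤ 2 * Real.log 2 := by
    have ht0 : 0 < 1 / x := by positivity
    have ht1 : 1 / x ≤ 1 := by rw [div_le_one hx0]; exact hx1
    have := concave_aux (1 / x) ht0.le ht1
    have he : Real.log (1 + 1/x) = Real.log (x+1) - Real.log x := by
      rw [show (1:ℝ) + 1/x = (x+1)/x by field_simp, Real.log_div hx10.ne' hx0.ne']
    rw [he] at this
    have := mul_le_mul_of_nonneg_left this hx0.le
    calc (x + 1) * (Real.log (x+1) - Real.log x)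
        = x * ((1 + 1/x) * (Real.log (x+1) - Real.log x)) := by field_simp
      _ ≤ x * (2 * (1/x) * Real.log 2) := this
      _ = 2 * Real.log 2 := by field_simp
  -- log(2^H) = 2 log 2 + log x
  have hlog2H : H * Real.log 2 = 2 * Real.log 2 + Real.log x := by
    have h1 : Real.log ((2:ℝ) ^ H) = H * Real.log 2 := Real.log_rpow (by norm_num) H
    have h2 : (2:ℝ) ^ H = 4 * x := by rw [hxdef]; ring
    rw [h2, Real.log_mul (by norm_num) hx0.ne'] at h1
    have h4 : Real.log 4 = 2 * Real.log 2 := by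
      rw [show (4:ℝ) = 2^2 by norm_num, Real.log_pow]; push_cast; ring
    linarith
  -- conclude E ≥ x + 1
  have hL : 0 < Real.log (x+1) - Real.log x := by
    rw [sub_pos]
    exact Real.log_lt_log hx0 (by linarith)
  have hEge : x + 1 ≤ E := by
    have h1 : x * (Real.log (x+1) - Real.log x) ≤ (E - 1) * (Real.log (x+1) - Real.log x) := by
      rw [hlog2H] at hkey
      nlinarith
    have := (mul_le_mul_iff_of_pos_right hL).mp h1
    linarith
  -- R ≥ 1 and R * q ≤ 1
  set S := (Finset.Icc 1 V).filter fun i => q ≤ p i with hS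
  obtain ⟨i₀, hi₀, hpi₀⟩ := htoken
  have hi₀S : i₀ ∈ S := Finset.mem_filter.mpr ⟨hi₀, le_of_eq hpi₀.symm⟩
  have hR1 : 1 ≤ R := by
    rw [hR]; exact Finset.card_pos.mpr ⟨i₀, hi₀S⟩
  have hRpos : (0:ℝ) < (R:ℝ) := by exact_mod_cast hR1
  have hRq : (R:ℝ) * q ≤ 1 := by
    have h1 : S.card • q ≤ ∑ i ∈ S, p i :=
      Finset.card_nsmul_le_sum S p q fun i hi => (Finset.mem_filter.mp hi).2
    have h2 : ∑ i ∈ S, p i ≤ ∑ i ∈ Finset.Icc 1 V, p i :=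
      Finset.sum_le_sum_of_subset_of_nonneg (Finset.filter_subset _ _)
        fun i hi _ => hnn i hi
    rw [nsmul_eq_mul] at h1
    rw [hR]; rw [hsum] at h2; push_cast; linarith
  -- finish
  have hμ : (1 / 4) * (2:ℝ) ^ H + 1 = x + 1 := by rw [hxdef]; ring
  have hmain : q * ((1 / 4) * (2:ℝ) ^ H + 1) ≤ E / (R:ℝ) := by
    rw [hμ]
    have hq1 : q ≤ 1 / (R:ℝ) := by
      rw [le_div_iff₀ hRpos]; linarith
    calc q * (x + 1) ≤ (1 / (R:ℝ)) * (x + 1) :=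
          mul_le_mul_of_nonneg_right hq1 (by linarith)
      _ = (x + 1) / (R:ℝ) := by ring
      _ ≤ E / (R:ℝ) := (div_le_div_iff_of_pos_right hRpos).mpr hEge
  exact ⟨hmain, fun K hK => Real.rpow_le_rpow (by positivity) hmain hK.le⟩
end
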